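/- arXiv:1103.2600 — 6 statements merged into one kernel-verified Lean document; each statement's English description precedes it below -/
import Mathlib

section
/- Let G be a finitely generated group and let i ≥ 1. Then the (i+1)-st term γ_{i+1}(G) of the lower central series of G is finite if and only if the quotient G/Z_i(G) by the i-th term of the upper central series of G is finite. -/
/-!
Both directions are proved by induction on `i`, passing from `G` to `Ḡ = G ⧸ Z(G)`: the
isomorphism `G ⧸ Z_{i+1}(G) ≅ Ḡ ⧸ Z_i(Ḡ)` and the equality `γ_{i+1}(Ḡ) = γ_{i+1}(G) Z(G) / Z(G)`
reduce the step to comparing, for `H = γ_{i+1}(G)`, the finiteness of `[H, G] = γ_{i+2}(G)` with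
that of `H Z(G) / Z(G)`.

If `G` is generated by a finite set `S`, then `h ↦ (s ↦ [h, s])` determines `h` modulo `Z(G)`, so
`H Z(G) / Z(G)` embeds into the maps `S → [H, G]`. Conversely (Baer), `[h, g]` only depends on
`h Z(G)` and on `g` modulo the centralizer of `H`, which contains `Z_{i+1}(G)` by the three
subgroups lemma. So `H` has finitely many commutators `[h, g]`, `[H, H]` is finite by Schur's
theorem, and modulo `[H, H]` the group `[H, G]` is abelian and generated by finitely many elements
of finite order: `[h, g]^m ≡ [h^m, g] = 1` as soon as `h^m` is central.
-/

open QuotientGroup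
open scoped commutatorElement

theorem Function.FactorsThrough.finite_range {α β γ : Type*} [Finite β] {f : α → β} {g : α → γ}
    (h : g.FactorsThrough f) : (Set.range g).Finite := by
  refine (Set.finite_range fun b : Set.range f => g b.2.choose).subset ?_
  rintro _ ⟨a, rfl⟩
  exact ⟨⟨f a, a, rfl⟩, h (⟨a, rfl⟩ : ∃ a', f a' = f a).choose_spec⟩

section

variable {G : Type*} [Group G]

theorem commutatorElement_eq_commutatorElement_left_iff {a b g : G} :
    ⁅a, g⁆ = ⁅b, g⁆ ↔ Commute (b⁻¹ * a) g := by
  rw [commutatorElement_def, commutatorElement_def, mul_left_inj]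
  constructor <;> intro h
  · calc b⁻¹ * a * g = b⁻¹ * (a * g * a⁻¹) * a := by group
      _ = g * (b⁻¹ * a) := by rw [h]; group
  · calc a * g * a⁻¹ = b * (b⁻¹ * a * g) * a⁻¹ := by group
      _ = b * g * b⁻¹ := by rw [h]; group

theorem commutatorElement_eq_commutatorElement_right_iff {a b g : G} :
    ⁅g, a⁆ = ⁅g, b⁆ ↔ Commute (b⁻¹ * a) g := by
  rw [← commutatorElement_inv a, ← commutatorElement_inv b, inv_inj,
    commutatorElement_eq_commutatorElement_left_iff]

end

namespace Subgroup

variable {G : Type*} [Group G]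

theorem commutator_commutator_le_of_rotate {H₁ H₂ H₃ N : Subgroup G} [N.Normal]
    (h1 : ⁅⁅H₂, H₃⁆, H₁⁆ ≤ N) (h2 : ⁅⁅H₃, H₁⁆, H₂⁆ ≤ N) : ⁅⁅H₁, H₂⁆, H₃⁆ ≤ N := by
  have hN (K : Subgroup G) : K ≤ N ↔ K.map (mk' N) = ⊥ := by
    rw [Subgroup.map_eq_bot_iff, ker_mk']
  simp only [hN, map_commutator] at h1 h2 ⊢
  exact commutator_commutator_eq_bot_of_rotate h1 h2

theorem commutator_lowerCentralSeries_upperCentralSeries_le (n m : ℕ) :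
    ⁅lowerCentralSeries (⊤ : Subgroup G) n, upperCentralSeries G (m + n + 1)⁆ ≤
      upperCentralSeries G m := by
  induction n generalizing m with
  | zero =>
    rw [lowerCentralSeries_zero, commutator_comm]
    exact commutator_upperCentralSeries_top_le G m
  | succ n ih =>
    have h_top (k : ℕ) :
        ⁅(⊤ : Subgroup G), upperCentralSeries G (k + 1)⁆ ≤ upperCentralSeries G k := by
      rw [commutator_comm]
      exact commutator_upperCentralSeries_top_le G k
    rw [lowerCentralSeries_succ]
    apply commutator_commutator_le_of_rotate
    · calc ⁅⁅⊤, upperCentralSeries G (m + (n + 1) + 1)⁆, lowerCentralSeries ⊤ n⁆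
          ≤ ⁅upperCentralSeries G (m + n + 1), lowerCentralSeries ⊤ n⁆ :=
            commutator_mono (h_top _) le_rfl
        _ ≤ upperCentralSeries G m := by rw [commutator_comm]; exact ih m
    · calc ⁅⁅upperCentralSeries G (m + (n + 1) + 1), lowerCentralSeries ⊤ n⁆, ⊤⁆
          ≤ ⁅upperCentralSeries G (m + 1), ⊤⁆ := by
            refine commutator_mono ?_ le_rfl
            rw [commutator_comm, show m + (n + 1) + 1 = m + 1 + n + 1 by omega]
            exact ih (m + 1)
        _ ≤ upperCentralSeries G m := commutator_upperCentralSeries_top_le G m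

theorem upperCentralSeries_le_centralizer_lowerCentralSeries (n : ℕ) :
    upperCentralSeries G (n + 1) ≤ centralizer (lowerCentralSeries (⊤ : Subgroup G) n) := by
  have h := commutator_lowerCentralSeries_upperCentralSeries_le (G := G) n 0
  rw [zero_add, upperCentralSeries_zero, le_bot_iff, commutator_eq_bot_iff_le_centralizer] at h
  exact le_centralizer_iff.mp h

theorem index_upperCentralSeries_succ (n : ℕ) :
    (upperCentralSeries G (n + 1)).index = (upperCentralSeries (G ⧸ center G) n).index := by
  rw [← comap_upperCentralSeries_quotient_center, index_comap_of_surjective _ (mk'_surjective _)]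

theorem map_top_lowerCentralSeries_of_surjective {G' : Type*} [Group G'] {f : G →* G'}
    (hf : Function.Surjective f) (n : ℕ) :
    (lowerCentralSeries (⊤ : Subgroup G) n).map f = lowerCentralSeries ⊤ n := by
  rw [map_lowerCentralSeries, map_top_of_surjective f hf]

theorem pow_card_map_mem_ker {G' : Type*} [Group G'] {f : G →* G'} {H : Subgroup G}
    [Finite (H.map f)] {h : G} (hh : h ∈ H) : h ^ Nat.card (H.map f) ∈ f.ker := by
  rw [MonoidHom.mem_ker, map_pow]
  exact congrArg Subtype.val (pow_card_eq_one' (G := H.map f) (x := ⟨f h, mem_map_of_mem f hh⟩))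

theorem finite_of_finite_map_of_finite_ker {G' : Type*} [Group G'] {f : G →* G'} [Finite f.ker]
    {K : Subgroup G} (hK : Finite (K.map f)) : Finite K := by
  let φ := f.domRestrict K
  have : Finite φ.ker := Finite.of_injective (fun x : φ.ker => (⟨x.1.1, x.2⟩ : f.ker))
    fun x y hxy => Subtype.ext (Subtype.ext (congrArg Subtype.val hxy :))
  have : Finite φ.range := by rwa [MonoidHom.domRestrict_range]
  have : Finite (K ⧸ φ.ker) := Finite.of_equiv _ (quotientKerEquivRange φ).symm.toEquiv
  exact Finite.of_subgroup_quotient φ.ker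

open scoped IsMulCommutative in
theorem finite_closure_of_commute_of_isOfFinOrder {s : Set G} (hs : s.Finite)
    (hcomm : ∀ x ∈ s, ∀ y ∈ s, x * y = y * x) (htors : ∀ x ∈ s, IsOfFinOrder x) :
    Finite (closure s) := by
  have : IsMulCommutative (closure s) := isMulCommutative_closure hcomm
  have : Group.FG (closure s) := (Group.fg_iff_subgroup_fg _).mpr ((fg_iff _).mpr ⟨s, rfl, hs⟩)
  refine CommGroup.finite_of_fg_isMulTorsion _ fun x => ?_
  have hle : closure (((↑) : closure s → G) ⁻¹' s) ≤ CommGroup.torsion (closure s) :=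
    (closure_le _).mpr fun y hy => Submonoid.isOfFinOrder_coe.mp (htors y hy)
  exact hle (by rw [closure_closure_coe_preimage]; exact mem_top x)

theorem finite_commutator_of_finite_commutatorElements {H : Subgroup G}
    (hfin : {x : G | ∃ a ∈ H, ∃ b ∈ H, ⁅a, b⁆ = x}.Finite) : Finite ↥⁅H, H⁆ := by
  have : Finite (commutatorSet H) := by
    refine Set.Finite.to_subtype (Set.Finite.of_finite_image (hfin.subset ?_)
      Subtype.val_injective.injOn)
    rintro _ ⟨_, ⟨a, b, rfl⟩, rfl⟩
    exact ⟨a, a.2, b, b.2, rfl⟩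
  rw [← map_subtype_commutator]
  exact Finite.of_surjective _ (H.subtype.subgroupMap_surjective _)

theorem finite_commutatorElements_of_finite_map_mk'_center {H : Subgroup G}
    [Finite (H.map (mk' (center G)))] [(centralizer (H : Set G)).FiniteIndex] :
    {x : G | ∃ h ∈ H, ∃ g ∈ (⊤ : Subgroup G), ⁅h, g⁆ = x}.Finite := by
  let f : H × G → H.map (mk' (center G)) × (G ⧸ centralizer H) :=
    fun p => (⟨mk' _ p.1, mem_map_of_mem _ p.1.2⟩, p.2)
  have hf : Function.FactorsThrough (fun p : H × G => ⁅(p.1 : G), p.2⁆) f := by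
    rintro ⟨a, g⟩ ⟨b, g'⟩ hab
    simp only [f, Prod.mk.injEq, Subtype.mk.injEq, mk'_apply, QuotientGroup.eq] at hab
    obtain ⟨hcenter, hcentralizer⟩ := hab
    have hcomm : Commute (g⁻¹ * g') b := (mem_centralizer_iff.mp hcentralizer b b.2).symm
    calc ⁅(a : G), g⁆ = ⁅(b : G), g⁆ :=
          (commutatorElement_eq_commutatorElement_left_iff.mpr
            (mem_center_iff.mp hcenter g).symm).symm
      _ = ⁅(b : G), g'⁆ :=
          (commutatorElement_eq_commutatorElement_right_iff.mpr hcomm).symm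
  convert hf.finite_range using 1
  ext x
  constructor
  · rintro ⟨h, hh, g, -, rfl⟩
    exact ⟨(⟨h, hh⟩, g), rfl⟩
  · rintro ⟨⟨h, g⟩, rfl⟩
    exact ⟨h, h.2, g, mem_top g, rfl⟩

theorem mk'_commutatorElement_pow {H : Subgroup G} [H.Normal] {h : G} (hh : h ∈ H) (g : G)
    (k : ℕ) : mk' ⁅H, H⁆ ⁅h ^ k, g⁆ = mk' ⁅H, H⁆ ⁅h, g⁆ ^ k := by
  induction k with
  | zero => simp
  | succ k ih =>
    have hmem : ⁅h ^ k, g⁆ ∈ H :=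
      commutator_le_left H ⊤ (commutator_mem_commutator (pow_mem hh k) (mem_top g))
    have hsplit : ⁅h ^ (k + 1), g⁆ = ⁅h, ⁅h ^ k, g⁆⁆ * ⁅h ^ k, g⁆ * ⁅h, g⁆ := by
      rw [pow_succ']
      simp only [commutatorElement_def]
      group
    have hker : mk' ⁅H, H⁆ ⁅h, ⁅h ^ k, g⁆⁆ = 1 :=
      (eq_one_iff _).mpr (commutator_mem_commutator hh hmem)
    rw [hsplit, map_mul, map_mul, hker, one_mul, ih, pow_succ]

theorem finite_commutator_top_of_finite_map_mk'_center {H : Subgroup G} [H.Normal]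
    [Finite (H.map (mk' (center G)))] [(centralizer (H : Set G)).FiniteIndex] :
    Finite ↥⁅H, (⊤ : Subgroup G)⁆ := by
  set S := {x : G | ∃ h ∈ H, ∃ g ∈ (⊤ : Subgroup G), ⁅h, g⁆ = x}
  have hS : S.Finite := finite_commutatorElements_of_finite_map_mk'_center
  have hSH : S ⊆ H := by
    rintro _ ⟨h, hh, g, hg, rfl⟩
    exact commutator_le_left H ⊤ (commutator_mem_commutator hh hg)
  have : Finite ↥⁅H, H⁆ := finite_commutator_of_finite_commutatorElements
    (hS.subset fun _ ⟨a, ha, b, _, hab⟩ => ⟨a, ha, b, mem_top b, hab⟩)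
  have : Finite (mk' ⁅H, H⁆).ker := by rwa [ker_mk']
  apply finite_of_finite_map_of_finite_ker (f := mk' ⁅H, H⁆)
  rw [commutator_def H ⊤, MonoidHom.map_closure]
  apply finite_closure_of_commute_of_isOfFinOrder (hS.image _)
  · rintro _ ⟨a, ha, rfl⟩ _ ⟨b, hb, rfl⟩
    rw [← commutatorElement_eq_one_iff_mul_comm, ← map_commutatorElement]
    exact (eq_one_iff _).mpr (commutator_mem_commutator (hSH ha) (hSH hb))
  · rintro _ ⟨_, ⟨h, hh, g, -, rfl⟩, rfl⟩
    have hcentral : h ^ Nat.card (H.map (mk' (center G))) ∈ center G := by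
      simpa using pow_card_map_mem_ker (f := mk' (center G)) hh
    refine isOfFinOrder_iff_pow_eq_one.mpr
      ⟨_, Nat.card_pos (α := H.map (mk' (center G))), ?_⟩
    rw [← mk'_commutatorElement_pow hh,
      commutatorElement_eq_one_iff_commute.mpr (mem_center_iff.mp hcentral g).symm, map_one]

theorem finite_map_mk'_center_of_finite_commutator_top [Group.FG G] {H : Subgroup G}
    [Finite ↥⁅H, (⊤ : Subgroup G)⁆] : Finite (H.map (mk' (center G))) := by
  obtain ⟨S, hS, hSfin⟩ := Group.fg_iff.mp ‹Group.FG G›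
  have : Finite S := hSfin.to_subtype
  let f : H → S → ↥⁅H, (⊤ : Subgroup G)⁆ :=
    fun h s => ⟨⁅(h : G), (s : G)⁆, commutator_mem_commutator h.2 (mem_top _)⟩
  have hf : Function.FactorsThrough (fun h : H => mk' (center G) h) f := by
    intro a b hab
    have hcentral : (a : G)⁻¹ * b ∈ center G := by
      rw [← centralizer_univ, ← coe_top, ← hS, centralizer_closure, mem_centralizer_iff]
      intro s hs
      exact (commutatorElement_eq_commutatorElement_left_iff.mp
        (congrArg Subtype.val (congrFun hab ⟨s, hs⟩)).symm).symm
    exact QuotientGroup.eq.mpr hcentral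
  refine Set.Finite.to_subtype (s := (H.map (mk' (center G)) : Set (G ⧸ center G))) ?_
  rw [coe_map, Set.image_eq_range]
  exact hf.finite_range

theorem finite_lowerCentralSeries_of_finiteIndex_upperCentralSeries (n : ℕ)
    [(upperCentralSeries G n).FiniteIndex] : Finite (lowerCentralSeries (⊤ : Subgroup G) n) := by
  induction n generalizing G with
  | zero =>
    have hG := FiniteIndex.index_ne_zero (H := upperCentralSeries G 0)
    rw [upperCentralSeries_zero, index_bot] at hG
    have : Finite G := Nat.finite_of_card_ne_zero hG
    infer_instance
  | succ n ih =>
    have : (upperCentralSeries (G ⧸ center G) n).FiniteIndex :=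
      ⟨index_upperCentralSeries_succ (G := G) n ▸ FiniteIndex.index_ne_zero⟩
    have : Finite ((lowerCentralSeries (⊤ : Subgroup G) n).map (mk' (center G))) := by
      rw [map_top_lowerCentralSeries_of_surjective (mk'_surjective _)]
      exact ih
    have : (centralizer (lowerCentralSeries (⊤ : Subgroup G) n : Set G)).FiniteIndex :=
      finiteIndex_of_le (upperCentralSeries_le_centralizer_lowerCentralSeries n)
    exact finite_commutator_top_of_finite_map_mk'_center

theorem finiteIndex_upperCentralSeries_of_finite_lowerCentralSeries [Group.FG G] (n : ℕ)
    [Finite (lowerCentralSeries (⊤ : Subgroup G) n)] : (upperCentralSeries G n).FiniteIndex := by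
  induction n generalizing G with
  | zero =>
    have : Finite (⊤ : Subgroup G) := ‹Finite (lowerCentralSeries (⊤ : Subgroup G) 0)›
    have : Finite G := Finite.of_equiv _ topEquiv.toEquiv
    rw [upperCentralSeries_zero, finiteIndex_iff, index_bot]
    exact Nat.card_pos.ne'
  | succ n ih =>
    have : Group.FG (G ⧸ center G) := Group.fg_of_surjective (mk'_surjective _)
    have : Finite ↥⁅lowerCentralSeries (⊤ : Subgroup G) n, (⊤ : Subgroup G)⁆ :=
      ‹Finite (lowerCentralSeries (⊤ : Subgroup G) (n + 1))›
    have : Finite (lowerCentralSeries (⊤ : Subgroup (G ⧸ center G)) n) := by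
      rw [← map_top_lowerCentralSeries_of_surjective (mk'_surjective _)]
      exact finite_map_mk'_center_of_finite_commutator_top
    exact ⟨index_upperCentralSeries_succ (G := G) n ▸ (ih (G := G ⧸ center G)).index_ne_zero⟩

end Subgroup

theorem finite_lowerCentralSeries_iff_finite_quotient_upperCentralSeries_general
    (G : Type*) [Group G] (hfg : Group.FG G) (i : ℕ) :
    Finite (Subgroup.lowerCentralSeries (⊤ : Subgroup G) i) ↔ Finite (G ⧸ Subgroup.upperCentralSeries G i) := by
  rw [← Subgroup.finiteIndex_iff_finite_quotient]
  exact ⟨fun _ => Subgroup.finiteIndex_upperCentralSeries_of_finite_lowerCentralSeries i,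
    fun _ => Subgroup.finite_lowerCentralSeries_of_finiteIndex_upperCentralSeries i⟩

/-- Theorem 1 (Faramarzi Salles): For a finitely generated group `G` and `i ≥ 1`,
`γ_{i+1}(G)` (here `lowerCentralSeries G i`, since `γ_1(G) = lowerCentralSeries G 0 = G`)
is finite iff `G / Z_i(G)` is finite, where `Z_i(G) = upperCentralSeries G i`. -/
theorem finite_lowerCentralSeries_iff_finite_quotient_upperCentralSeries
    (G : Type*) [Group G] (hfg : Group.FG G) (i : ℕ) (hi : 1 ≤ i) :
    Finite (Subgroup.lowerCentralSeries (⊤ : Subgroup G) i) ↔ Finite (G ⧸ Subgroup.upperCentralSeries G i) :=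
  finite_lowerCentralSeries_iff_finite_quotient_upperCentralSeries_general G hfg i
end

section
/- Let G be a finitely generated group and let i ≥ 1. If the (i+1)-st term γ_{i+1}(G) of the lower central series of G is finite, then the i-th term Z_i(G) of the upper central series of G has finite index in G. -/
/-!
Induct on `i` by passing to `G ⧸ Z(G)`: it is again finitely generated, `Z_{i+1}(G)` is the
preimage of `Z_i(G ⧸ Z(G))`, and `γ_{i+1}(G ⧸ Z(G))` is the image of `γ_{i+1}(G)`. That image is
finite when `γ_{i+2}(G) = [γ_{i+1}(G), G]` is: for a finite generating set `S`, the map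
`n ↦ (s ↦ [n, s])` sends `γ_{i+1}(G)` into the finite set `S → γ_{i+2}(G)`, and two elements have
the same image only if they agree modulo the centre.
-/

open Subgroup QuotientGroup
open scoped commutatorElement

theorem commutatorElement_eq_commutatorElement_iff {G : Type*} [Group G] {a b g : G} :
    ⁅a, g⁆ = ⁅b, g⁆ ↔ Commute g (a⁻¹ * b) := by
  rw [commutatorElement_def, commutatorElement_def, mul_left_inj, Commute, SemiconjBy]
  constructor <;> intro h
  · calc g * (a⁻¹ * b) = a⁻¹ * (a * g * a⁻¹) * b := by group
      _ = a⁻¹ * b * g := by rw [h]; group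
  · calc a * g * a⁻¹ = a * (g * (a⁻¹ * b)) * b⁻¹ * a⁻¹ * a := by group
      _ = b * g * b⁻¹ := by rw [h]; group

namespace Subgroup

variable {G : Type*} [Group G]

theorem center_eq_centralizer_of_closure_eq_top {S : Set G} (hS : closure S = ⊤) :
    center G = centralizer S := by
  rw [← centralizer_closure, hS, coe_top, centralizer_univ]

theorem finite_map_mk_center_of_finite_commutator [Group.FG G] (N : Subgroup G)
    [Finite (⁅N, ⊤⁆ : Subgroup G)] : Finite (N.map (mk' (center G))) := by
  obtain ⟨S, hS⟩ := Group.FG.out (G := G)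
  let φ : N → (S → (⁅N, ⊤⁆ : Subgroup G)) := fun n s =>
    ⟨⁅(n : G), (s : G)⁆, commutator_mem_commutator n.2 (mem_top _)⟩
  have hφ : ∀ a b : N, φ a = φ b → (a : G ⧸ center G) = b := by
    intro a b hab
    rw [QuotientGroup.eq, center_eq_centralizer_of_closure_eq_top hS, mem_centralizer_iff]
    intro s hs
    exact commutatorElement_eq_commutatorElement_iff.mp
      (congrArg Subtype.val (congrFun hab ⟨s, hs⟩))
  have hsurj := (mk' (center G)).subgroupMap_surjective N
  refine Finite.of_injective (φ ∘ Function.surjInv hsurj) fun x y hxy => ?_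
  rw [← Function.surjInv_eq hsurj x, ← Function.surjInv_eq hsurj y]
  exact Subtype.ext (hφ _ _ hxy)

theorem finite_lowerCentralSeries_quotient_center [Group.FG G] {i : ℕ}
    (h : Finite ((⊤ : Subgroup G).lowerCentralSeries (i + 1))) :
    Finite ((⊤ : Subgroup (G ⧸ center G)).lowerCentralSeries i) := by
  rw [lowerCentralSeries_succ] at h
  rw [← map_top_of_surjective _ (mk'_surjective _), ← map_lowerCentralSeries]
  exact finite_map_mk_center_of_finite_commutator _

theorem FiniteIndex.comap_of_surjective {G' : Type*} [Group G'] {H : Subgroup G'} [H.FiniteIndex]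
    {f : G →* G'} (hf : Function.Surjective f) : (H.comap f).FiniteIndex :=
  ⟨by rw [index_comap_of_surjective H hf]; exact FiniteIndex.index_ne_zero⟩

end Subgroup

theorem finiteIndex_upperCentralSeries_of_finite_lowerCentralSeries_general
    (G : Type*) [Group G] (hfg : Group.FG G) (i : ℕ)
    (hfin : Finite ((⊤ : Subgroup G).lowerCentralSeries i)) :
    (Subgroup.upperCentralSeries G i).FiniteIndex := by
  induction i generalizing G with
  | zero =>
    have : Finite (⊤ : Subgroup G) := hfin
    have : Finite G := .of_equiv _ Subgroup.topEquiv.toEquiv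
    infer_instance
  | succ i ih =>
    have hQ := finite_lowerCentralSeries_quotient_center hfin
    rw [← Subgroup.comap_upperCentralSeries_quotient_center]
    have := ih _ inferInstance hQ
    exact FiniteIndex.comap_of_surjective (mk'_surjective _)

/-- For a finitely generated group `G` and `i ≥ 1`, if `γ_{i+1}(G)` (here
`lowerCentralSeries G i`, since `γ_1(G) = lowerCentralSeries G 0 = G`) is finite,
then `Z_i(G) = upperCentralSeries G i` has finite index in `G`. -/
theorem finiteIndex_upperCentralSeries_of_finite_lowerCentralSeries
    (G : Type*) [Group G] (hfg : Group.FG G) (i : ℕ) (hi : 1 ≤ i)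
    (hfin : Finite ((⊤ : Subgroup G).lowerCentralSeries i)) :
    (Subgroup.upperCentralSeries G i).FiniteIndex :=
  finiteIndex_upperCentralSeries_of_finite_lowerCentralSeries_general G hfg i hfin
end

section
/- Let G be a group such that the central quotient G/Z(G) is finitely generated, and let i ≥ 1. If the (i+1)-st term γ_{i+1}(G) of the lower central series of G is finite, then the i-th term Z_i(G) of the upper central series of G has finite index in G. -/
/-!
If `G/Z(G)` is generated by the images of `t₁, …, tₖ` and `⁅L, G⁆` is finite, then
`x ↦ ⁅x, tⱼ⁆` embeds `L / (L ∩ C(tⱼ))` into `⁅L, G⁆`, so `L ∩ Z(G) = ⋂ⱼ L ∩ C(tⱼ)` has finite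
index in `L`, i.e. the image of `L` in `G/Z(G)` is finite. With `L = γᵢ(G)` this makes
`γᵢ(G/Z(G))` finite, and induction on `i`, with `Z_{i+1}(G)` the preimage of `Zᵢ(G/Z(G))`,
reduces everything to the case `i = 0`, where `G` itself is finite.
-/

open Subgroup
open scoped commutatorElement

section

variable {G : Type*} [Group G]

theorem commutatorElement_eq_commutatorElement_iff_s4 (x y t : G) :
    ⁅x, t⁆ = ⁅y, t⁆ ↔ x⁻¹ * y ∈ centralizer {t} := by
  rw [mem_centralizer_singleton_iff, commutatorElement_def, commutatorElement_def, mul_left_inj]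
  constructor
  · intro h
    calc x⁻¹ * y * t = x⁻¹ * (y * t * y⁻¹) * y := by group
      _ = x⁻¹ * (x * t * x⁻¹) * y := by rw [h]
      _ = t * (x⁻¹ * y) := by group
  · intro h
    calc x * t * x⁻¹ = x * (t * (x⁻¹ * y)) * y⁻¹ := by group
      _ = x * (x⁻¹ * y * t) * y⁻¹ := by rw [h]
      _ = y * t * y⁻¹ := by group

theorem finiteIndex_centralizer_subgroupOf (L : Subgroup G) (t : G)
    [Finite (⁅L, ⊤⁆ : Subgroup G)] : ((centralizer {t}).subgroupOf L).FiniteIndex := by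
  let f : L ⧸ (centralizer {t}).subgroupOf L → (⁅L, ⊤⁆ : Subgroup G) :=
    Quotient.lift (fun x ↦ ⟨⁅(x : G), t⁆, commutator_mem_commutator x.2 (mem_top t)⟩)
      fun x y hxy ↦ Subtype.ext <|
        (commutatorElement_eq_commutatorElement_iff_s4 _ _ _).2 <|
          mem_subgroupOf.1 <|
            QuotientGroup.leftRel_apply (s := (centralizer {t}).subgroupOf L) |>.1 hxy
  have hf : Function.Injective f := by
    rintro ⟨x⟩ ⟨y⟩ hxy
    exact Quotient.sound <| QuotientGroup.leftRel_apply.2 <|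
      (commutatorElement_eq_commutatorElement_iff_s4 _ _ _).1 (congrArg Subtype.val hxy)
  have : Finite (L ⧸ (centralizer {t}).subgroupOf L) := Finite.of_injective f hf
  exact finiteIndex_of_finite_quotient

theorem center_eq_iInf_centralizer_of_closure_sup_center_eq_top {S : Set G}
    (hS : closure S ⊔ center G = ⊤) : center G = ⨅ t ∈ S, centralizer {t} := by
  refine le_antisymm (le_iInf₂ fun t _ ↦ center_le_centralizer {t}) fun x hx ↦ ?_
  have hS_le : closure S ⊔ center G ≤ centralizer {x} := by
    refine sup_le (closure_le _ |>.2 fun t ht ↦ ?_) (center_le_centralizer {x})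
    have hxt : x ∈ centralizer {t} := mem_iInf.1 (mem_iInf.1 hx t) ht
    exact mem_centralizer_singleton_iff.2 (mem_centralizer_singleton_iff.1 hxt).symm
  rw [hS] at hS_le
  exact mem_center_iff.2 fun g ↦ mem_centralizer_singleton_iff.1 (hS_le (mem_top g))

theorem exists_finset_closure_sup_eq_top_of_fg_quotient (N : Subgroup G) [N.Normal]
    [hfg : Group.FG (G ⧸ N)] : ∃ S : Finset G, closure (S : Set G) ⊔ N = ⊤ := by
  classical
  obtain ⟨T, hT⟩ := hfg.out
  refine ⟨T.image Quotient.out, ?_⟩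
  have himage : QuotientGroup.mk' N '' (T.image Quotient.out : Set G) = T := by
    simp [Set.image_image]
  have hcomap := comap_map_eq (QuotientGroup.mk' N) (closure (T.image Quotient.out : Set G))
  rw [QuotientGroup.ker_mk'] at hcomap
  rw [← hcomap, MonoidHom.map_closure, himage, hT, comap_top]

theorem finiteIndex_center_subgroupOf [Group.FG (G ⧸ center G)] (L : Subgroup G)
    [Finite (⁅L, ⊤⁆ : Subgroup G)] : ((center G).subgroupOf L).FiniteIndex := by
  obtain ⟨S, hS⟩ := exists_finset_closure_sup_eq_top_of_fg_quotient (center G)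
  rw [center_eq_iInf_centralizer_of_closure_sup_center_eq_top hS]
  simp only [subgroupOf, comap_iInf, Finset.mem_coe]
  exact finiteIndex_iInf' _ fun t _ ↦ finiteIndex_centralizer_subgroupOf L t

theorem finite_map_mk'_of_finiteIndex_subgroupOf (N L : Subgroup G) [N.Normal]
    [(N.subgroupOf L).FiniteIndex] : Finite (L.map (QuotientGroup.mk' N)) := by
  refine Nat.finite_of_card_ne_zero ?_
  rw [← relIndex_ker, QuotientGroup.ker_mk']
  exact FiniteIndex.index_ne_zero

end

theorem finiteIndex_upperCentralSeries_of_finite_lowerCentralSeries_of_fg_centralQuotient_general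
    (G : Type*) [Group G] (hfg : Group.FG (G ⧸ Subgroup.center G)) (i : ℕ)
    (hfin : Finite (Subgroup.lowerCentralSeries (⊤ : Subgroup G) i)) :
    (Subgroup.upperCentralSeries G i).FiniteIndex := by
  induction i generalizing G with
  | zero =>
    have : Finite (⊤ : Subgroup G) := hfin
    have : Finite G := Finite.of_equiv _ topEquiv.toEquiv
    infer_instance
  | succ n ih =>
    have hπ := QuotientGroup.mk'_surjective (center G)
    have : Finite (⁅(⊤ : Subgroup G).lowerCentralSeries n, ⊤⁆ : Subgroup G) := hfin
    have hcenter : (center G).subgroupOf ((⊤ : Subgroup G).lowerCentralSeries n) |>.FiniteIndex :=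
      finiteIndex_center_subgroupOf _
    have hfinQ : Finite ((⊤ : Subgroup (G ⧸ center G)).lowerCentralSeries n) := by
      rw [← map_top_of_surjective _ hπ, ← map_lowerCentralSeries]
      exact finite_map_mk'_of_finiteIndex_subgroupOf _ _
    have hQ := ih (G ⧸ center G) inferInstance hfinQ
    rw [← Subgroup.comap_upperCentralSeries_quotient_center]
    exact ⟨by rw [index_comap_of_surjective _ hπ]; exact hQ.index_ne_zero⟩

/-- For a group `G` with `G / Z(G)` finitely generated and `i ≥ 1`, if `γ_{i+1}(G)`
(here `lowerCentralSeries G i`, since `γ_1(G) = lowerCentralSeries G 0 = G`) is finite,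
then `Z_i(G) = upperCentralSeries G i` has finite index in `G`. -/
theorem finiteIndex_upperCentralSeries_of_finite_lowerCentralSeries_of_fg_centralQuotient
    (G : Type*) [Group G] (hfg : Group.FG (G ⧸ Subgroup.center G)) (i : ℕ) (hi : 1 ≤ i)
    (hfin : Finite (Subgroup.lowerCentralSeries (⊤ : Subgroup G) i)) :
    (Subgroup.upperCentralSeries G i).FiniteIndex :=
  finiteIndex_upperCentralSeries_of_finite_lowerCentralSeries_of_fg_centralQuotient_general G hfg i
    hfin
end

section
/- Let G be a finitely generated group, let i ≥ 1, and suppose that the (i+1)-st term γ_{i+1}(G) of the lower central series of G is finite. Then the quotient γ_i(G)/(γ_i(G) ∩ Z(G)) is finite; that is, γ_i(G) ∩ Z(G) has finite index in γ_i(G). -/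
open scoped commutatorElement

/-! If `⁅H, G⁆` is finite, then for each `g` the map `h ↦ ⁅h, g⁆` identifies the cosets of
`H ∩ C(g)` in `H` with elements of `⁅H, G⁆`, since `⁅h, g⁆ = ⁅h', g⁆` exactly when `h⁻¹ h'`
commutes with `g`. Intersecting over a finite generating set of `G` gives `H ∩ Z(G)`, which
therefore has finite index in `H`. For `H = γ_i(G)` we have `⁅H, G⁆ = γ_{i+1}(G)`. -/

namespace Subgroup

variable {G : Type*} [Group G]

theorem commutatorElement_eq_iff_inv_mul_mem_centralizer {a b g : G} :
    ⁅a, g⁆ = ⁅b, g⁆ ↔ a⁻¹ * b ∈ centralizer {g} := by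
  rw [commutatorElement_def, commutatorElement_def, mul_left_inj, mem_centralizer_singleton_iff]
  constructor <;> intro h
  · calc a⁻¹ * b * g = a⁻¹ * (b * g * b⁻¹) * b := by group
      _ = g * (a⁻¹ * b) := by rw [← h]; group
  · calc a * g * a⁻¹ = a * (g * (a⁻¹ * b)) * b⁻¹ := by group
      _ = b * g * b⁻¹ := by rw [← h]; group

variable (H K : Subgroup G) [Finite (⁅H, K⁆ : Subgroup G)]

theorem isFiniteRelIndex_centralizer_singleton {g : G} (hg : g ∈ K) :
    (centralizer {g}).IsFiniteRelIndex H := by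
  let f : H → (⁅H, K⁆ : Subgroup G) := fun h ↦ ⟨⁅(h : G), g⁆, commutator_mem_commutator h.2 hg⟩
  have hker : QuotientGroup.leftRel ((centralizer {g}).subgroupOf H) = Setoid.ker f := by
    ext a b
    rw [QuotientGroup.leftRel_apply, Setoid.ker_def, Subtype.ext_iff, mem_subgroupOf,
      commutatorElement_eq_iff_inv_mul_mem_centralizer]
    rfl
  have : Finite (Quotient (Setoid.ker f)) := .of_injective _ (Setoid.kerLift_injective f)
  rw [isFiniteRelIndex_iff_finiteIndex, finiteIndex_iff_finite_quotient]
  rwa [← hker] at this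

theorem isFiniteRelIndex_centralizer_of_fg (hK : K.FG) : (centralizer K).IsFiniteRelIndex H := by
  obtain ⟨s, hs, hfin⟩ := (fg_iff K).mp hK
  have := hfin.to_subtype
  rw [isFiniteRelIndex_iff_relIndex_ne_zero, ← hs, centralizer_closure, centralizer_eq_iInf,
    iInf_subtype']
  exact relIndex_iInf_ne_zero fun g ↦
    (isFiniteRelIndex_centralizer_singleton H K (hs ▸ subset_closure g.2)).relIndex_ne_zero

end Subgroup

theorem finiteIndex_inf_center_subgroupOf_lowerCentralSeries_general
    (G : Type*) [Group G] (hfg : Group.FG G) (i : ℕ)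
    (hfin : Finite ((⊤ : Subgroup G).lowerCentralSeries i)) :
    (((⊤ : Subgroup G).lowerCentralSeries (i - 1) ⊓ Subgroup.center G).subgroupOf
      ((⊤ : Subgroup G).lowerCentralSeries (i - 1))).FiniteIndex := by
  set H := (⊤ : Subgroup G).lowerCentralSeries (i - 1)
  have hle : (⁅H, ⊤⁆ : Subgroup G) ≤ (⊤ : Subgroup G).lowerCentralSeries i := by
    -- `i - 1` truncates: for `i = 0`, `H = G`.
    cases i with
    | zero => exact le_top
    | succ => exact le_rfl
  have : Finite (⁅H, ⊤⁆ : Subgroup G) := Finite.of_injective _ (Subgroup.inclusion_injective hle)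
  rw [Subgroup.inf_subgroupOf_left, ← Subgroup.centralizer_univ, ← Subgroup.coe_top,
    ← Subgroup.isFiniteRelIndex_iff_finiteIndex]
  exact Subgroup.isFiniteRelIndex_centralizer_of_fg H ⊤ hfg.out

/-- For a finitely generated group `G` and `i ≥ 1`, if `γ_{i+1}(G)` (here
`lowerCentralSeries G i`) is finite, then `γ_i(G) ∩ Z(G)` has finite index in
`γ_i(G)` (here `lowerCentralSeries G (i - 1)`). -/
theorem finiteIndex_inf_center_subgroupOf_lowerCentralSeries
    (G : Type*) [Group G] (hfg : Group.FG G) (i : ℕ) (hi : 1 ≤ i)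
    (hfin : Finite ((⊤ : Subgroup G).lowerCentralSeries i)) :
    (((⊤ : Subgroup G).lowerCentralSeries (i - 1) ⊓ Subgroup.center G).subgroupOf
      ((⊤ : Subgroup G).lowerCentralSeries (i - 1))).FiniteIndex :=
  finiteIndex_inf_center_subgroupOf_lowerCentralSeries_general G hfg i hfin
end

section
/- Let G be a group such that the central quotient G/Z(G) is finitely generated, let i ≥ 1, and suppose that the (i+1)-st term γ_{i+1}(G) of the lower central series of G is finite. Then γ_i(G) ∩ Z(G) has finite index in γ_i(G). -/
/-!
Lift a finite generating set of `G ⧸ Z(G)` to a finite set `T ⊆ G`; then `Z(G)` is the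
intersection of the centralizers of the elements of `T`. For `g ∈ T`, the cosets of the
centralizer of `g` in `H = γ_i(G)` correspond to the commutators `⁅h, g⁆` with `h ∈ H`, which
lie in the finite group `γ_{i+1}(G) = ⁅H, G⁆`. So `H ∩ Z(G)` is a finite intersection of
subgroups of finite index in `H`.
-/

open scoped commutatorElement

namespace Subgroup

variable {G : Type*} [Group G]

theorem commutatorElement_eq_commutatorElement_iff {x y g : G} :
    ⁅x, g⁆ = ⁅y, g⁆ ↔ x⁻¹ * y ∈ centralizer {g} := by
  rw [mem_centralizer_singleton_iff, commutatorElement_def, commutatorElement_def, mul_left_inj]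
  constructor
  · intro h
    calc x⁻¹ * y * g = x⁻¹ * (y * g * y⁻¹) * y := by group
      _ = g * (x⁻¹ * y) := by rw [← h]; group
  · intro h
    calc x * g * x⁻¹ = x * (x⁻¹ * y * g) * (x⁻¹ * y)⁻¹ * x⁻¹ := by rw [h]; group
      _ = y * g * y⁻¹ := by group

theorem relIndex_centralizer_singleton_eq_card (H : Subgroup G) (g : G) :
    (centralizer {g}).relIndex H = Nat.card (Set.range fun h : H => ⁅(h : G), g⁆) :=
  Nat.card_congr <| (Quotient.congrRight fun x y => by
    rw [QuotientGroup.leftRel_apply, mem_subgroupOf, Setoid.ker_def, coe_mul, coe_inv,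
      commutatorElement_eq_commutatorElement_iff]).trans (Setoid.quotientKerEquivRange _)

theorem center_eq_centralizer_of_closure_sup_center_eq_top {T : Set G}
    (hT : closure T ⊔ center G = ⊤) : center G = centralizer T := by
  refine le_antisymm (center_le_centralizer T) fun x hx => ?_
  refine centralizer_eq_top_iff_subset.mp ?_ (Set.mem_singleton x)
  rw [eq_top_iff, ← hT]
  exact sup_le ((closure_le _).mpr fun t ht => mem_centralizer_singleton_iff.mpr (hx t ht))
    (center_le_centralizer _)

theorem closure_image_out_sup_eq_top {N : Subgroup G} [N.Normal] {S : Set (G ⧸ N)}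
    (hS : closure S = ⊤) : closure (Quotient.out '' S) ⊔ N = ⊤ :=
  calc closure (Quotient.out '' S) ⊔ N
      = comap (QuotientGroup.mk' N) (map (QuotientGroup.mk' N) (closure (Quotient.out '' S))) := by
        rw [comap_map_eq, QuotientGroup.ker_mk']
    _ = ⊤ := by simp [MonoidHom.map_closure, Set.image_image, hS]

theorem relIndex_center_ne_zero_of_finite_commutator {H : Subgroup G}
    (hfg : Group.FG (G ⧸ center G)) (hH : Finite (⁅H, ⊤⁆ : Subgroup G)) :
    (center G).relIndex H ≠ 0 := by
  obtain ⟨S, hS⟩ := hfg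
  rw [center_eq_centralizer_of_closure_sup_center_eq_top (closure_image_out_sup_eq_top hS),
    centralizer_eq_iInf, ← iInf_subtype'']
  refine relIndex_iInf_ne_zero fun g => ?_
  have hfin : (Set.range fun h : H => ⁅(h : G), (g : G)⁆).Finite :=
    (Set.toFinite (⁅H, ⊤⁆ : Subgroup G)).subset <| Set.range_subset_iff.mpr fun h =>
      commutator_mem_commutator h.2 (mem_top _)
  rw [relIndex_centralizer_singleton_eq_card]
  exact Nat.card_ne_zero.mpr ⟨⟨_, 1, rfl⟩, hfin.to_subtype⟩

theorem commutator_lowerCentralSeries_pred_le (n : ℕ) :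
    ⁅(⊤ : Subgroup G).lowerCentralSeries (n - 1), ⊤⁆ ≤
      (⊤ : Subgroup G).lowerCentralSeries n := by
  cases n with
  | zero => exact le_top
  | succ n => exact (lowerCentralSeries_succ _ n).ge

end Subgroup

theorem finiteIndex_inf_center_subgroupOf_lowerCentralSeries_of_fg_centralQuotient_general
    (G : Type*) [Group G] (hfg : Group.FG (G ⧸ Subgroup.center G)) (i : ℕ)
    (hfin : Finite ((⊤ : Subgroup G).lowerCentralSeries i)) :
    (((⊤ : Subgroup G).lowerCentralSeries (i - 1) ⊓ Subgroup.center G).subgroupOf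
      ((⊤ : Subgroup G).lowerCentralSeries (i - 1))).FiniteIndex := by
  have hle := Subgroup.commutator_lowerCentralSeries_pred_le (G := G) i
  have hcomm : Finite (⁅(⊤ : Subgroup G).lowerCentralSeries (i - 1), ⊤⁆ : Subgroup G) :=
    Finite.of_injective _ (Subgroup.inclusion_injective hle)
  exact ⟨(Subgroup.inf_relIndex_left _ _).trans_ne
    (Subgroup.relIndex_center_ne_zero_of_finite_commutator hfg hcomm)⟩

/-- For a group `G` with `G / Z(G)` finitely generated and `i ≥ 1`, if `γ_{i+1}(G)`
(here `lowerCentralSeries G i`) is finite, then `γ_i(G) ∩ Z(G)` has finite index in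
`γ_i(G)` (here `lowerCentralSeries G (i - 1)`). -/
theorem finiteIndex_inf_center_subgroupOf_lowerCentralSeries_of_fg_centralQuotient
    (G : Type*) [Group G] (hfg : Group.FG (G ⧸ Subgroup.center G)) (i : ℕ) (hi : 1 ≤ i)
    (hfin : Finite ((⊤ : Subgroup G).lowerCentralSeries i)) :
    (((⊤ : Subgroup G).lowerCentralSeries (i - 1) ⊓ Subgroup.center G).subgroupOf
      ((⊤ : Subgroup G).lowerCentralSeries (i - 1))).FiniteIndex :=
  finiteIndex_inf_center_subgroupOf_lowerCentralSeries_of_fg_centralQuotient_general G hfg i hfin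
end

section
/- Let G be a group such that the central quotient G/Z(G) is finitely generated, let i ≥ 1, and suppose that the (i+1)-st term γ_{i+1}(G) of the lower central series of G is finite. Then the i-th term γ_i(G/Z(G)) of the lower central series of the quotient group G/Z(G) is finite. -/
/-!
Lift a finite generating set of `G / Z(G)` to elements `g₁, …, gₖ` of `G`. An element of `G`
commuting with every `gⱼ` is central, so `x Z(G)` is determined by the tuple of commutators
`(⁅x, g₁⁆, …, ⁅x, gₖ⁆)`. For `x ∈ γ_i(G)` this tuple lies in `γ_{i+1}(G)ᵏ`, a finite set, and the
image of `γ_i(G)` in `G / Z(G)` is `γ_i(G / Z(G))`.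
-/

open Subgroup
open scoped commutatorElement

theorem Set.Finite.image_of_factorsThrough {α β γ : Type*} {f : α → β} {g : α → γ}
    (hfg : Function.FactorsThrough f g) {s : Set α} (hs : (g '' s).Finite) : (f '' s).Finite := by
  rcases s.eq_empty_or_nonempty with rfl | ⟨a, -⟩
  · simp
  refine (hs.image (Function.extend g f fun _ => f a)).subset ?_
  rintro _ ⟨x, hx, rfl⟩
  exact ⟨g x, Set.mem_image_of_mem g hx, hfg.extend_apply _ x⟩

section CentralQuotient

variable {G : Type*} [Group G] {ι : Type*} {g : ι → G}

theorem mem_center_of_forall_commute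
    (hg : closure (Set.range fun i => (g i : G ⧸ center G)) = ⊤) {x : G}
    (hx : ∀ i, Commute x (g i)) : x ∈ center G := by
  set K := centralizer {x}
  have hgK : closure (Set.range fun i => (g i : G ⧸ center G)) ≤ K.map (QuotientGroup.mk' _) :=
    closure_le _ |>.mpr <| Set.range_subset_iff.mpr fun i =>
      ⟨g i, mem_centralizer_singleton_iff.mpr (hx i).symm, rfl⟩
  rw [hg, top_le_iff] at hgK
  have hK : K = ⊤ :=
    calc K = center G ⊔ K := (sup_of_le_right (center_le_centralizer {x})).symm
      _ = (K.map (QuotientGroup.mk' _)).comap (QuotientGroup.mk' _) :=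
        (QuotientGroup.comap_map_mk' _ K).symm
      _ = ⊤ := by rw [hgK, comap_top]
  exact mem_center_iff.mpr fun y => mem_centralizer_singleton_iff.mp (hK ▸ mem_top y : y ∈ K)

theorem factorsThrough_commutatorElement
    (hg : closure (Set.range fun i => (g i : G ⧸ center G)) = ⊤) :
    Function.FactorsThrough (fun x : G => (x : G ⧸ center G)) fun x i => ⁅x, g i⁆ := by
  intro x y hxy
  refine QuotientGroup.eq.mpr <| mem_center_of_forall_commute hg fun i => ?_
  have h : x * g i * x⁻¹ = y * g i * y⁻¹ := by
    simpa only [commutatorElement_def, mul_left_inj] using congrFun hxy i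
  calc x⁻¹ * y * g i = x⁻¹ * (y * g i * y⁻¹) * y := by group
    _ = g i * (x⁻¹ * y) := by rw [← h]; group

end CentralQuotient

/-- For a group `G` with `G / Z(G)` finitely generated and `i ≥ 1`, if `γ_{i+1}(G)`
(here `lowerCentralSeries G i`) is finite, then `γ_i(G / Z(G))`
(here `lowerCentralSeries (G ⧸ Subgroup.center G) (i - 1)`) is finite. -/
theorem finite_lowerCentralSeries_quotient_center_of_finite_lowerCentralSeries
    (G : Type*) [Group G] (hfg : Group.FG (G ⧸ Subgroup.center G)) (i : ℕ) (hi : 1 ≤ i)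
    (hfin : Finite ((⊤ : Subgroup G).lowerCentralSeries i)) :
    Finite ((⊤ : Subgroup (G ⧸ Subgroup.center G)).lowerCentralSeries (i - 1)) := by
  obtain ⟨n, rfl⟩ := Nat.exists_eq_add_of_le' hi
  obtain ⟨S, hS⟩ := hfg.out
  choose g hg using fun s : S => QuotientGroup.mk_surjective (s : G ⧸ center G)
  have hgen : closure (Set.range fun s => (g s : G ⧸ center G)) = ⊤ := by
    rwa [show (Set.range fun s => (g s : G ⧸ center G)) = S by ext; simp [hg]]
  rw [Nat.add_sub_cancel, ← map_top_of_surjective _ (QuotientGroup.mk'_surjective (center G)),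
    ← map_lowerCentralSeries]
  have hcomm : (fun x s => ⁅x, g s⁆) '' ((⊤ : Subgroup G).lowerCentralSeries n : Set G) ⊆
      Set.univ.pi fun _ => ((⊤ : Subgroup G).lowerCentralSeries (n + 1) : Set G) := by
    rintro _ ⟨x, hx, rfl⟩ s -
    exact commutator_mem_commutator hx (mem_top (g s))
  exact Set.Finite.to_subtype <|
    Set.Finite.image_of_factorsThrough (factorsThrough_commutatorElement hgen) <|
      (Set.Finite.pi fun _ => Set.toFinite _).subset hcomm
end
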